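/- Let V be a module over a ring with two finite decreasing filtrations F and L satisfying: F^a = L^a = V and F^b = L^b = 0 for some a ≤ b; F^j ⊆ L^j for all j; and for all i ≠ j the bigraded piece Gr_F^j Gr_L^i V := (F^j ∩ L^i)/((F^{j+1} ∩ L^i) + (F^j ∩ L^{i+1})) vanishes. Then F^j = L^j for all j. -/
import Mathlib


/-- If two finite decreasing filtrations `F ⊆ L` on a module have vanishing mixed graded
pieces `Gr_F^j Gr_L^i = 0` for `i ≠ j`, then `F = L`. -/
theorem filtrations_eq_of_bigraded_vanishing {R V : Type} [Ring R]
    [AddCommGroup V] [Module R V] (F L : ℤ → Submodule R V) (a b : ℤ)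
    (hab : a ≤ b)
    (hFdec : Antitone F) (hLdec : Antitone L)
    (hFa : F a = ⊤) (hLa : L a = ⊤) (hFb : F b = ⊥) (hLb : L b = ⊥)
    (hFL : ∀ j, F j ≤ L j)
    (hvanish : ∀ i j : ℤ, i ≠ j →
      F j ⊓ L i ≤ (F (j + 1) ⊓ L i) ⊔ (F j ⊓ L (i + 1))) :
    ∀ j, F j = L j := by
  -- Step 1: L i ≤ F i ⊔ L (i+1) for all i.
  have key : ∀ i : ℤ, L i ≤ F i ⊔ L (i + 1) := by
    intro i
    have step : ∀ k : ℕ, F (i - k) ⊓ L i ≤ F i ⊔ L (i + 1) := by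
      intro k
      induction k with
      | zero =>
        simpa using le_trans inf_le_left (le_sup_left)
      | succ n ih =>
        have hne : i ≠ i - (n + 1 : ℕ) := by
          intro h; omega
        have h1 := hvanish i (i - (n + 1 : ℕ)) hne
        have h2 : i - (n + 1 : ℕ) + 1 = i - (n : ℕ) := by push_cast; ring
        rw [h2] at h1
        refine le_trans h1 (sup_le ih (le_trans inf_le_right le_sup_right))
    rcases le_or_gt a i with h | h
    · have := step (i - a).toNat
      have hia : i - ((i - a).toNat : ℤ) = a := by omega
      rw [hia, hFa, top_inf_eq] at this
      exact this
    · have : F i = ⊤ := eq_top_iff.mpr (hFa ▸ hFdec h.le)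
      rw [this]; exact le_trans le_top le_sup_left
  -- Step 2: L j ≤ F j by descending induction.
  have down : ∀ k : ℕ, L (b - k) ≤ F (b - k) := by
    intro k
    induction k with
    | zero => simp [hLb]
    | succ n ih =>
      have h2 : b - (n + 1 : ℕ) + 1 = b - (n : ℕ) := by push_cast; ring
      have := key (b - (n + 1 : ℕ))
      rw [h2] at this
      refine le_trans this (sup_le le_rfl ?_)
      exact le_trans ih (hFdec (by push_cast; omega))
  have hLF : ∀ j, L j ≤ F j := by
    intro j
    rcases le_or_gt j b with h | h
    · have := down (b - j).toNat
      have hj : b - ((b - j).toNat : ℤ) = j := by omega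
      rwa [hj] at this
    · have : L j = ⊥ := le_bot_iff.mp (hLb ▸ hLdec h.le)
      simp [this]
  exact fun j => le_antisymm (hFL j) (hLF j)
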